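/- Let 𝒞 be a BMZ-collection, let ℛ = (R_1, …, R_r) ∈ 𝔅(𝒞), and let π be a permutation of [r]. Define ℛ^π := (R_{π(1)} \ {z}, …, R_{π(r−1)} \ {z}, R_{π(r)} ∪ {z}). Then csgn(ℛ^π) = sgn(π)^{d+1} · csgn(ℛ) and gsgn(ℛ^π) = sgn(π)^{d+1} · gsgn(ℛ). -/

import Mathlib

/-!
The permutations encoding `ℛ^π` are `π⁻¹ ∘ π_k`, so each of the `d + 1` factors of `csgn` picks
up `sgn π`. For `gsgn`: the vertices `w_i` of a simplex centred at the origin are permuted,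
`w_i ↦ w_{π⁻¹ i}`, by a linear map `B`, and `det B = sgn π`. Indeed, the matrices with rows
`(w_i, 1)` and `(w_{π⁻¹ i}, 1)` differ by a row permutation, and each has determinant `r` times
the determinant of its first `r - 1` vertex rows, as the vertices sum to zero; affine
independence makes these determinants nonzero. Relabelling the classes replaces every row
`x⁺ ⊗ w_i` of `M` by `x⁺ ⊗ B w_i`, i.e. multiplies `M` by `I_{d+1} ⊗ B`, whose determinant is
`(det B)^(d+1)`.
-/

open Finset

namespace BMZ

noncomputable section

/-- Points of `ℝ^d`. -/
abbrev Pt (d : ℕ) := EuclideanSpace ℝ (Fin d)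

/-- The space `ℝ^N`, `N = (d+1)(r-1)`, with `r = s+2`, presented with double
indices `(k, l) ∈ [d+1] × [r-1]`. -/
abbrev CSp (d s : ℕ) := EuclideanSpace ℝ (Fin (d + 1) × Fin (s + 1))

/-- `w` is the vertex set of a regular `(r-1)`-dimensional simplex centered at the
origin (here `r = s+2`): the vertices are affinely independent, pairwise
equidistant with a positive common distance, and their barycenter is the origin. -/
def IsRegularSimplex {s : ℕ} (w : Fin (s + 2) → EuclideanSpace ℝ (Fin (s + 1))) : Prop :=
  AffineIndependent ℝ w ∧
    (∃ e : ℝ, 0 < e ∧ ∀ i j, i ≠ j → dist (w i) (w j) = e) ∧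
    ∑ i, w i = 0

/-- `x⁺ = (x, 1) ∈ ℝ^{d+1}`. -/
def xplus {d : ℕ} (x : Pt d) : Fin (d + 1) → ℝ := Fin.snoc (x : Fin d → ℝ) 1

/-- The `i`-th clone `φ_i(x) := x⁺ ⊗ w_i ∈ ℝ^N`. -/
def clone {d s : ℕ} (w : Fin (s + 2) → EuclideanSpace ℝ (Fin (s + 1)))
    (x : Pt d) (i : Fin (s + 2)) : CSp d s :=
  WithLp.toLp 2 (fun kl => xplus x kl.1 * w i kl.2)

/-- The Sarkaria–Onn transform `Φ(𝒫)` of an `r`-partition `𝒫 = (P_1, …, P_r)`: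
for every point `p ∈ P_i` we put the `i`-th clone of `p` into `Φ(𝒫)`. -/
def Phi {d s : ℕ} (w : Fin (s + 2) → EuclideanSpace ℝ (Fin (s + 1)))
    (P : Fin (s + 2) → Finset (Pt d)) : Set (CSp d s) :=
  ⋃ i, (fun p => clone w p i) '' (P i : Set (Pt d))

/-- `N = (d+1)(r-1)`, the number of points of a BMZ-collection other than `z`. -/
abbrev NN (d s : ℕ) : ℕ := (d + 1) * (s + 1)

/-- Indices of the points `c_1, …, c_{N+1}` of a BMZ-collection (the last point
is `z`). A BMZ-collection is an injective map `c : Idx d s → Pt d`, with the color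
classes `C_1, …, C_{d+2}` consisting of consecutive points as given by `colorOf`. -/
abbrev Idx (d s : ℕ) := Fin (NN d s + 1)

/-- The color of the `i`-th point: each of the first `d+1` classes consists of
`r-1` consecutive points, and the last class is the singleton `{z}`. -/
def colorOf (d s : ℕ) (i : Idx d s) : Fin (d + 2) :=
  if h : (i : ℕ) < NN d s then
    Fin.castSucc ⟨(i : ℕ) / (s + 1),
      Nat.div_lt_of_lt_mul (by rw [Nat.mul_comm]; exact h)⟩
  else Fin.last (d + 1)

/-- Maximal rainbow `r`-partitions `ℛ = (R_1, …, R_r) ∈ 𝔅(𝒞)` (with `z ∈ R_r`) are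
in bijective correspondence with tuples of permutations `π_k` of `[r]`, one for
each of the first `d+1` colors: `π_k j` is the index of the class containing the
`j`-th point of `C_k` for `j ≤ r-1`, and `π_k r` is the index of the unique class
containing no point of `C_k`. -/
abbrev PartEnc (d s : ℕ) := Fin (d + 1) → Equiv.Perm (Fin (s + 2))

/-- The class of the `i`-th point in the partition encoded by `σ`; the point `z`
lies in the last class. -/
def classOf {d s : ℕ} (σ : PartEnc d s) (i : Idx d s) : Fin (s + 2) :=
  if h : (i : ℕ) < NN d s then
    σ ⟨(i : ℕ) / (s + 1), Nat.div_lt_of_lt_mul (by rw [Nat.mul_comm]; exact h)⟩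
      (Fin.castSucc ⟨(i : ℕ) % (s + 1), Nat.mod_lt _ (Nat.succ_pos s)⟩)
  else Fin.last (s + 1)

variable {d s : ℕ}

open Classical in
/-- The `k`-th color class of the configuration `c`, as a finite set of points. -/
def colorClass (c : Idx d s → Pt d) (k : Fin (d + 2)) : Finset (Pt d) :=
  (Finset.univ.filter fun i => colorOf d s i = k).image c

open Classical in
/-- The class `R_i` of the partition encoded by `σ`, as a finite set of points. -/
def classSet (c : Idx d s → Pt d) (σ : PartEnc d s) (i : Fin (s + 2)) : Finset (Pt d) :=
  (Finset.univ.filter fun j => classOf σ j = i).image c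

/-- `σ` encodes a Tverberg partition: the convex hulls of its classes have a
common point. -/
def IsTverberg (c : Idx d s → Pt d) (σ : PartEnc d s) : Prop :=
  (⋂ i, convexHull ℝ (classSet c σ i : Set (Pt d))).Nonempty

/-- The clones of all the points of the configuration, w.r.t. the partition `σ`. -/
def allClones (w : Fin (s + 2) → EuclideanSpace ℝ (Fin (s + 1)))
    (c : Idx d s → Pt d) (σ : PartEnc d s) : Idx d s → CSp d s :=
  fun i => clone w (c i) (classOf σ i)

/-- The vertices of `F_ℛ = conv Φ(ℛ - z)`, ordered by the numbering of the points. -/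
def rows (w : Fin (s + 2) → EuclideanSpace ℝ (Fin (s + 1)))
    (c : Idx d s → Pt d) (σ : PartEnc d s) : Fin (NN d s) → CSp d s :=
  fun i => allClones w c σ i.castSucc

/-- `Φ(ℛ - a)`: the clones of all points except `a`. -/
def PhiMinus (w : Fin (s + 2) → EuclideanSpace ℝ (Fin (s + 1)))
    (c : Idx d s → Pt d) (σ : PartEnc d s) (a : Idx d s) : Set (CSp d s) :=
  allClones w c σ '' {i | i ≠ a}

/-- The simplex `F_ℛ = conv Φ(ℛ - z)`. -/
def Fface (w : Fin (s + 2) → EuclideanSpace ℝ (Fin (s + 1)))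
    (c : Idx d s → Pt d) (σ : PartEnc d s) : Set (CSp d s) :=
  convexHull ℝ (Set.range (rows w c σ))

/-- `𝒞` is in sufficiently general position: each `Φ(ℛ - z)` is affinely
independent, and `0 ∉ aff Φ(ℛ - a)` for all `ℛ ∈ 𝔅(𝒞)` and `a ∈ C`. -/
def SuffGenPos (w : Fin (s + 2) → EuclideanSpace ℝ (Fin (s + 1)))
    (c : Idx d s → Pt d) : Prop :=
  (∀ σ : PartEnc d s, AffineIndependent ℝ (rows w c σ)) ∧
  (∀ (σ : PartEnc d s) (a : Idx d s), (0 : CSp d s) ∉ affineSpan ℝ (PhiMinus w c σ a))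

/-- A ridge `conv Φ(ℛ - z - a)`, `a ∈ C \ {z}`. -/
def ridge (w : Fin (s + 2) → EuclideanSpace ℝ (Fin (s + 1)))
    (c : Idx d s → Pt d) (σ : PartEnc d s) (a : Fin (NN d s)) : Set (CSp d s) :=
  convexHull ℝ (rows w c σ '' {i | i ≠ a})

/-- `𝒞` is in almost general position: all ridges avoid the origin. -/
def AlmostGenPos (w : Fin (s + 2) → EuclideanSpace ℝ (Fin (s + 1)))
    (c : Idx d s → Pt d) : Prop :=
  ∀ (σ : PartEnc d s) (a : Fin (NN d s)), (0 : CSp d s) ∉ ridge w c σ a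

/-- The ray emanating from `0` in the direction `u`. -/
def raySet (u : CSp d s) : Set (CSp d s) := {x | ∃ t : ℝ, 0 ≤ t ∧ x = t • u}

/-- A ray emanating from `0` is generic for `𝒞` if it intersects no ridge. -/
def GenericRay (w : Fin (s + 2) → EuclideanSpace ℝ (Fin (s + 1)))
    (c : Idx d s → Pt d) (u : CSp d s) : Prop :=
  ∀ (σ : PartEnc d s) (a : Fin (NN d s)), ∀ x ∈ raySet u, x ∉ ridge w c σ a

/-- The combinatorial sign `csgn(ℛ) = ∏_k sgn(π_k)`. -/
def csgn (σ : PartEnc d s) : ℤ := ∏ k, (Equiv.Perm.sign (σ k) : ℤ)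

/-- The sign of a real number, as an integer. -/
def sgnR (x : ℝ) : ℤ := if 0 < x then 1 else if x < 0 then -1 else 0

/-- The geometric sign `gsgn(ℛ)`: the sign of the determinant of the `N × N`
matrix whose rows are the vertices of `F_ℛ`, ordered by the numbering of the
points of `C`. -/
def gsgn (w : Fin (s + 2) → EuclideanSpace ℝ (Fin (s + 1)))
    (c : Idx d s → Pt d) (σ : PartEnc d s) : ℤ :=
  sgnR (Matrix.det (Matrix.of fun i j : Fin (NN d s) =>
    rows w c σ i (finProdFinEquiv.symm j)))

/-- The sign `sgn(ℛ) = gsgn(ℛ) ⬝ csgn(ℛ)`. -/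
def psgn (w : Fin (s + 2) → EuclideanSpace ℝ (Fin (s + 1)))
    (c : Idx d s → Pt d) (σ : PartEnc d s) : ℤ :=
  gsgn w c σ * csgn σ

/-- `z* = φ_r(z)`. -/
def zstar (w : Fin (s + 2) → EuclideanSpace ℝ (Fin (s + 1)))
    (c : Idx d s → Pt d) : CSp d s :=
  clone w (c (Fin.last (NN d s))) (Fin.last (s + 1))

open Classical in
/-- The degree of `𝒞` measured along the ray from `0` in direction `u`:
`deg_ψ(𝒞) = Σ_{ℛ ∈ 𝔅(𝒞), ψ ∩ F_ℛ ≠ ∅} sgn(ℛ)`. -/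
def degRay (w : Fin (s + 2) → EuclideanSpace ℝ (Fin (s + 1)))
    (c : Idx d s → Pt d) (u : CSp d s) : ℤ :=
  ∑ σ : PartEnc d s, if (raySet u ∩ Fface w c σ).Nonempty then psgn w c σ else 0

/-- The degree `deg(𝒞)`, measured along the ray `ρ` emanating from `0` in the
direction `-z*`. -/
def degC (w : Fin (s + 2) → EuclideanSpace ℝ (Fin (s + 1)))
    (c : Idx d s → Pt d) : ℤ :=
  degRay w c (-(zstar w c))

end

end BMZ

open Matrix

theorem Equiv.Perm.ext_of_apply_eq_of_ne {α : Type*} {f g : Equiv.Perm α} (a : α)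
    (h : ∀ x, x ≠ a → f x = g x) : f = g := by
  ext x
  by_cases hx : x = a
  · subst hx
    by_contra hne
    have hy : g.symm (f x) ≠ x := fun hy => hne (g.symm_apply_eq.mp hy)
    have := h _ hy
    rw [Equiv.apply_symm_apply] at this
    exact hy (f.injective this)
  · exact h x hx

section CenteredSimplex

variable {n : ℕ} (w : Fin (n + 1) → EuclideanSpace ℝ (Fin n))

def homogeneousMatrix : Matrix (Fin (n + 1)) (Fin (n + 1)) ℝ :=
  Matrix.of fun i => Fin.snoc (w i : Fin n → ℝ) 1

def vertexMatrix : Matrix (Fin n) (Fin n) ℝ :=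
  Matrix.of fun j l => w j.castSucc l

variable {w}

theorem det_homogeneousMatrix (hsum : ∑ i, w i = 0) :
    (homogeneousMatrix w).det = (n + 1) * (vertexMatrix w).det := by
  have hrows : ∑ i, homogeneousMatrix w i = Fin.snoc 0 (n + 1 : ℝ) := by
    refine funext fun l => (Finset.sum_apply l _ _).trans ?_
    induction l using Fin.lastCases with
    | last => simp [homogeneousMatrix]
    | cast l =>
      have := congrArg (fun v : EuclideanSpace ℝ (Fin n) => v l) hsum
      simpa [homogeneousMatrix, WithLp.ofLp_sum] using this
  -- adding all rows to the last one turns it into `(0, …, 0, n + 1)`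
  have hupd := det_updateRow_sum (homogeneousMatrix w) (Fin.last n) (fun _ => 1)
  simp only [one_smul, hrows] at hupd
  rw [← hupd, det_succ_row _ (Fin.last n), Fin.sum_univ_castSucc]
  simp only [updateRow_self, Fin.snoc_castSucc, Pi.zero_apply, mul_zero, zero_mul,
    Finset.sum_const_zero, Fin.snoc_last, Fin.succAbove_last, zero_add, ← two_mul,
    pow_mul, neg_one_sq, one_pow, one_mul, Fin.val_last]
  congr 2
  ext i j
  simp [homogeneousMatrix, vertexMatrix]

theorem det_homogeneousMatrix_ne_zero (haff : AffineIndependent ℝ w) :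
    (homogeneousMatrix w).det ≠ 0 := by
  intro h0
  obtain ⟨v, hv, hv0⟩ := exists_vecMul_eq_zero_iff.mpr h0
  have hcoord (l : Fin (n + 1)) : ∑ i, v i * homogeneousMatrix w i l = 0 := congrFun hv0 l
  refine hv (funext (haff.eq_zero_of_sum_eq_zero (s := Finset.univ) ?_ ?_ · (Finset.mem_univ _)))
  · simpa [homogeneousMatrix] using hcoord (Fin.last n)
  · ext l
    simpa [homogeneousMatrix, WithLp.ofLp_sum] using hcoord l.castSucc

theorem det_vertexMatrix_comp_perm (hsum : ∑ i, w i = 0) (π : Equiv.Perm (Fin (n + 1))) :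
    (vertexMatrix (w ∘ π)).det = Equiv.Perm.sign π * (vertexMatrix w).det := by
  have hperm :
      (homogeneousMatrix (w ∘ π)).det = Equiv.Perm.sign π * (homogeneousMatrix w).det :=
    det_permute π (homogeneousMatrix w)
  rw [det_homogeneousMatrix (w := w ∘ π) ((Equiv.sum_comp π w).trans hsum),
    det_homogeneousMatrix hsum, mul_left_comm] at hperm
  exact mul_left_cancel₀ (by positivity) hperm

theorem vecMul_eq_of_castSucc {B : Matrix (Fin n) (Fin n) ℝ}
    (w' : Fin (n + 1) → EuclideanSpace ℝ (Fin n))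
    (hsum : ∑ i, w i = 0) (hsum' : ∑ i, w' i = 0)
    (h : ∀ j : Fin n, (w j.castSucc : Fin n → ℝ) ᵥ* B = w' j.castSucc) (i : Fin (n + 1)) :
    (w i : Fin n → ℝ) ᵥ* B = w' i := by
  induction i using Fin.lastCases with
  | cast j => exact h j
  | last =>
    have hlast (v : Fin (n + 1) → EuclideanSpace ℝ (Fin n)) (hv : ∑ i, v i = 0) :
        (v (Fin.last n) : Fin n → ℝ) = -∑ j : Fin n, (v j.castSucc : Fin n → ℝ) := by
      rw [Fin.sum_univ_castSucc] at hv
      rw [← WithLp.ofLp_sum, ← WithLp.ofLp_neg, eq_neg_of_add_eq_zero_right hv]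
    rw [hlast w hsum, hlast w' hsum', neg_vecMul, sum_vecMul]
    simp only [h]

theorem exists_vecMul_eq_comp_perm (haff : AffineIndependent ℝ w) (hsum : ∑ i, w i = 0)
    (π : Equiv.Perm (Fin (n + 1))) :
    ∃ B : Matrix (Fin n) (Fin n) ℝ,
      B.det = Equiv.Perm.sign π ∧ ∀ i, (w i : Fin n → ℝ) ᵥ* B = w (π i) := by
  have hV : (vertexMatrix w).det ≠ 0 := by
    have := det_homogeneousMatrix_ne_zero haff
    rw [det_homogeneousMatrix hsum] at this
    exact right_ne_zero_of_mul this
  refine ⟨(vertexMatrix w)⁻¹ * vertexMatrix (w ∘ π), ?_, ?_⟩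
  · rw [det_mul, det_nonsing_inv, det_vertexMatrix_comp_perm hsum, Ring.inverse_eq_inv']
    field_simp
  · refine vecMul_eq_of_castSucc (w ∘ π) hsum ((Equiv.sum_comp π w).trans hsum) ?_
    intro j
    exact congrFun (mul_nonsing_inv_cancel_left _ _ (isUnit_iff_ne_zero.mpr hV)) j

end CenteredSimplex

namespace BMZ

variable {d s : ℕ}

theorem classOf_finProdFinEquiv (σ : PartEnc d s) (k : Fin (d + 1)) (m : Fin (s + 1)) :
    classOf σ (finProdFinEquiv (k, m)).castSucc = σ k m.castSucc := by
  have hlt : ((finProdFinEquiv (k, m)).castSucc : ℕ) < NN d s := (finProdFinEquiv (k, m)).isLt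
  rw [classOf, dif_pos hlt]
  congr 2
  · ext
    simp [Nat.add_mul_div_left _ _ (Nat.succ_pos s), Nat.div_eq_of_lt m.isLt]
  · ext
    simp [Nat.mod_eq_of_lt m.isLt]

theorem eq_symm_mul_of_classOf {σ σ' : PartEnc d s} {π : Equiv.Perm (Fin (s + 2))}
    (h : ∀ j : Fin (NN d s), classOf σ' j.castSucc = π.symm (classOf σ j.castSucc))
    (k : Fin (d + 1)) : σ' k = π.symm * σ k :=
  Equiv.Perm.ext_of_apply_eq_of_ne (Fin.last (s + 1)) fun x hx => by
    obtain ⟨m, rfl⟩ := Fin.exists_castSucc_eq.mpr hx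
    simpa [classOf_finProdFinEquiv] using h (finProdFinEquiv (k, m))

theorem csgn_of_forall_eq_mul {σ σ' : PartEnc d s} {τ : Equiv.Perm (Fin (s + 2))}
    (h : ∀ k, σ' k = τ * σ k) : csgn σ' = (Equiv.Perm.sign τ : ℤ) ^ (d + 1) * csgn σ := by
  simp [csgn, h, Finset.prod_mul_distrib]

theorem rows_eq_of_classOf {σ σ' : PartEnc d s} {π : Equiv.Perm (Fin (s + 2))}
    (h : ∀ j : Fin (NN d s), classOf σ' j.castSucc = π.symm (classOf σ j.castSucc))
    (w : Fin (s + 2) → EuclideanSpace ℝ (Fin (s + 1))) (c : Idx d s → Pt d) :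
    rows w c σ' = rows (w ∘ π.symm) c σ := by
  funext j
  simp only [rows, allClones, h]
  rfl

def cloneMatrix (w : Fin (s + 2) → EuclideanSpace ℝ (Fin (s + 1))) (c : Idx d s → Pt d)
    (σ : PartEnc d s) : Matrix (Fin (NN d s)) (Fin (NN d s)) ℝ :=
  Matrix.of fun i j => rows w c σ i (finProdFinEquiv.symm j)

open scoped Kronecker in
theorem cloneMatrix_eq_mul_kronecker {w w' : Fin (s + 2) → EuclideanSpace ℝ (Fin (s + 1))}
    {B : Matrix (Fin (s + 1)) (Fin (s + 1)) ℝ}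
    (h : ∀ i, (w' i : Fin (s + 1) → ℝ) = (w i : Fin (s + 1) → ℝ) ᵥ* B)
    (c : Idx d s → Pt d) (σ : PartEnc d s) :
    cloneMatrix w' c σ = cloneMatrix w c σ *
      ((1 : Matrix (Fin (d + 1)) (Fin (d + 1)) ℝ) ⊗ₖ B).submatrix
        finProdFinEquiv.symm finProdFinEquiv.symm := by
  ext i j
  rw [mul_apply, ← finProdFinEquiv.sum_comp, Fintype.sum_prod_type]
  simp [cloneMatrix, rows, allClones, clone, h, one_apply, vecMul, dotProduct, Finset.mul_sum,
    mul_assoc, -finProdFinEquiv_symm_apply]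

open scoped Kronecker in
theorem det_cloneMatrix_of_vecMul {w w' : Fin (s + 2) → EuclideanSpace ℝ (Fin (s + 1))}
    {B : Matrix (Fin (s + 1)) (Fin (s + 1)) ℝ}
    (h : ∀ i, (w' i : Fin (s + 1) → ℝ) = (w i : Fin (s + 1) → ℝ) ᵥ* B)
    (c : Idx d s → Pt d) (σ : PartEnc d s) :
    (cloneMatrix w' c σ).det = (cloneMatrix w c σ).det * B.det ^ (d + 1) := by
  rw [cloneMatrix_eq_mul_kronecker h, det_mul, det_submatrix_equiv_self, det_kronecker]
  simp

theorem sgnR_mul_units (x : ℝ) (u : ℤˣ) : sgnR (x * u) = u * sgnR x := by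
  rcases Int.units_eq_one_or u with rfl | rfl
  · simp
  · simp only [sgnR, Units.val_neg, Units.val_one, Int.cast_neg, Int.cast_one, mul_neg, mul_one,
      neg_pos, neg_lt_zero]
    split_ifs <;> first | rfl | linarith

end BMZ

open BMZ in
theorem sign_of_permuted_partition_general (d s : ℕ)
    (w : Fin (s + 2) → EuclideanSpace ℝ (Fin (s + 1))) (hw : IsRegularSimplex w)
    (c : Idx d s → Pt d)
    (σ σ' : PartEnc d s) (π : Equiv.Perm (Fin (s + 2)))
    (hσ' : ∀ j : Fin (NN d s),
      classOf σ' j.castSucc = π.symm (classOf σ j.castSucc)) :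
    csgn σ' = (Equiv.Perm.sign π : ℤ) ^ (d + 1) * csgn σ ∧
    gsgn w c σ' = (Equiv.Perm.sign π : ℤ) ^ (d + 1) * gsgn w c σ := by
  obtain ⟨haff, -, hsum⟩ := hw
  refine ⟨by simpa using csgn_of_forall_eq_mul (eq_symm_mul_of_classOf hσ'), ?_⟩
  obtain ⟨B, hdet, hB⟩ := exists_vecMul_eq_comp_perm haff hsum π.symm
  calc gsgn w c σ' = sgnR (cloneMatrix (w ∘ π.symm) c σ).det := by
        rw [gsgn, rows_eq_of_classOf hσ']; rfl
    _ = sgnR ((cloneMatrix w c σ).det * ((Equiv.Perm.sign π ^ (d + 1) : ℤˣ) : ℤ)) := by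
        rw [det_cloneMatrix_of_vecMul (w' := w ∘ π.symm) (fun i => (hB i).symm), hdet,
          Equiv.Perm.sign_symm]
        push_cast; rfl
    _ = _ := by rw [sgnR_mul_units, Units.val_pow_eq_pow_val]; rfl

open BMZ in
/-- Let `𝒞` be a BMZ-collection, `ℛ = (R_1, …, R_r) ∈ 𝔅(𝒞)` (encoded by `σ`) and
let `π` be a permutation of `[r]`. If `σ'` encodes
`ℛ^π = (R_{π(1)} \\ {z}, …, R_{π(r-1)} \\ {z}, R_{π(r)} ∪ {z})` — that is,
each point other than `z` lies in class `i` of `ℛ^π` exactly if it lies in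
class `π(i)` of `ℛ` — then `csgn(ℛ^π) = sgn(π)^(d+1)·csgn(ℛ)` and
`gsgn(ℛ^π) = sgn(π)^(d+1)·gsgn(ℛ)`. -/
theorem sign_of_permuted_partition (d s : ℕ) (hd : 1 ≤ d)
    (w : Fin (s + 2) → EuclideanSpace ℝ (Fin (s + 1))) (hw : IsRegularSimplex w)
    (c : Idx d s → Pt d) (hc : Function.Injective c)
    (σ σ' : PartEnc d s) (π : Equiv.Perm (Fin (s + 2)))
    (hσ' : ∀ j : Fin (NN d s),
      classOf σ' j.castSucc = π.symm (classOf σ j.castSucc)) :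
    csgn σ' = (Equiv.Perm.sign π : ℤ) ^ (d + 1) * csgn σ ∧
    gsgn w c σ' = (Equiv.Perm.sign π : ℤ) ^ (d + 1) * gsgn w c σ :=
  sign_of_permuted_partition_general d s w hw c σ σ' π hσ'
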